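/- Let L be a bounded distributive lattice and X(L) its prime spectrum with the Priestley topology, ordered by inclusion. Then the map a ↦ N_a = {P ∈ X(L) : a ∉ P} is an injective bounded lattice homomorphism from L into the lattice of subsets of X(L) (it sends ⊥ to ∅, ⊤ to X(L), joins to unions and meets to intersections), and its range is exactly the collection of clopen downward closed subsets of X(L). -/

import Mathlib

/-- The prime spectrum of a bounded distributive lattice `L`: the set of prime
(order-theoretic) ideals of `L`, ordered by inclusion. -/
def PriestleySpec (L : Type*) [DistribLattice L] [BoundedOrder L] : Type _ :=
  {P : Order.Ideal L // P.IsPrime}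

variable {L : Type*} [DistribLattice L] [BoundedOrder L]

instance : PartialOrder (PriestleySpec L) :=
  inferInstanceAs (PartialOrder {P : Order.Ideal L // P.IsPrime})

/-- The basic set `N_a = {P ∈ X(L) : a ∉ P}`. -/
def Nset (a : L) : Set (PriestleySpec L) := {P | a ∉ P.1}

/-- The Priestley topology on the prime spectrum: generated by the sets `N_a`
together with their complements. -/
instance : TopologicalSpace (PriestleySpec L) :=
  TopologicalSpace.generateFrom
    ((Set.range fun a : L => Nset a) ∪ (Set.range fun a : L => (Nset a)ᶜ))

/-! ### Auxiliary lemmas -/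

lemma mem_Nset {a : L} {P : PriestleySpec L} : P ∈ Nset a ↔ a ∉ P.1 := Iff.rfl

lemma nset_bot : Nset (⊥ : L) = (∅ : Set (PriestleySpec L)) := by
  ext P; simp [Nset, P.1.bot_mem]

lemma nset_top : Nset (⊤ : L) = (Set.univ : Set (PriestleySpec L)) := by
  ext P
  simpa [Nset] using P.2.toIsProper.top_notMem

lemma nset_sup (a b : L) : Nset (a ⊔ b) = Nset a ∪ Nset b := by
  ext P
  have : a ⊔ b ∈ P.1 ↔ a ∈ P.1 ∧ b ∈ P.1 :=
    ⟨fun h => ⟨P.1.lower le_sup_left h, P.1.lower le_sup_right h⟩,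
     fun h => P.1.sup_mem h.1 h.2⟩
  simp only [Nset, Set.mem_setOf_eq, Set.mem_union, this]
  tauto

lemma nset_inf (a b : L) : Nset (a ⊓ b) = Nset a ∩ Nset b := by
  ext P
  have : a ⊓ b ∈ P.1 ↔ a ∈ P.1 ∨ b ∈ P.1 :=
    ⟨fun h => P.2.mem_or_mem h,
     fun h => h.elim (fun h => P.1.lower inf_le_left h) (fun h => P.1.lower inf_le_right h)⟩
  simp only [Nset, Set.mem_setOf_eq, Set.mem_inter_iff, this]
  tauto

lemma isOpen_nset (a : L) : IsOpen (Nset a) :=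
  TopologicalSpace.isOpen_generateFrom_of_mem (Or.inl ⟨a, rfl⟩)

lemma isOpen_nset_compl (a : L) : IsOpen ((Nset a)ᶜ) :=
  TopologicalSpace.isOpen_generateFrom_of_mem (Or.inr ⟨a, rfl⟩)

lemma isClopen_nset (a : L) : IsClopen (Nset a) :=
  ⟨isOpen_compl_iff.mp (isOpen_nset_compl a), isOpen_nset a⟩

lemma isLowerSet_nset (a : L) : IsLowerSet (Nset a) := by
  intro P Q hQP hP hQ
  exact hP (hQP hQ)

lemma le_of_nset_subset {a b : L} (h : Nset a ⊆ Nset b) : a ≤ b := by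
  by_contra hab
  have hdis : Disjoint ((Order.PFilter.principal a : Order.PFilter L) : Set L)
      ((Order.Ideal.principal b : Order.Ideal L) : Set L) := by
    rw [Set.disjoint_left]
    intro x hxF hxI
    exact hab (le_trans (Order.PFilter.mem_principal.mp hxF)
      (Order.Ideal.mem_principal.mp hxI))
  obtain ⟨J, hJprime, hJI, hJF⟩ :=
    DistribLattice.prime_ideal_of_disjoint_filter_ideal hdis
  have hbJ : b ∈ J := hJI (Order.Ideal.mem_principal.mpr le_rfl)
  have haJ : a ∉ J :=
    Set.disjoint_left.mp hJF (Order.PFilter.mem_principal.mpr le_rfl)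
  have : (⟨J, hJprime⟩ : PriestleySpec L) ∈ Nset a := haJ
  exact (h this) hbJ

lemma nset_injective : Function.Injective (Nset (L := L)) := by
  intro a b h
  exact le_antisymm (le_of_nset_subset h.le) (le_of_nset_subset h.ge)

/-! ### Compactness via an embedding into `L → Bool` -/

noncomputable def priestleyToFun (P : PriestleySpec L) : L → Bool :=
  fun a => @decide (a ∈ P.1) (Classical.propDecidable _)

lemma priestleyToFun_eq_true {P : PriestleySpec L} {a : L} :
    priestleyToFun P a = true ↔ a ∈ P.1 :=
  ⟨fun h => @of_decide_eq_true _ (Classical.propDecidable _) h,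
   fun h => @decide_eq_true _ (Classical.propDecidable _) h⟩

lemma priestleyToFun_eq_false {P : PriestleySpec L} {a : L} :
    priestleyToFun P a = false ↔ a ∉ P.1 := by
  rw [← Bool.not_eq_true, priestleyToFun_eq_true]

lemma isClopen_evalSet (a : L) (b : Bool) : IsClopen {f : L → Bool | f a = b} :=
  (isClopen_discrete {b}).preimage (continuous_apply a)

lemma continuous_priestleyToFun : Continuous (priestleyToFun (L := L)) := by
  apply continuous_pi
  intro a
  rw [continuous_discrete_rng]
  intro b
  cases b
  · have : (fun P => priestleyToFun P a) ⁻¹' {false} = Nset a := by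
      ext P; simp [Nset, priestleyToFun_eq_false]
    rw [this]; exact isOpen_nset a
  · have : (fun P => priestleyToFun P a) ⁻¹' {true} = (Nset a)ᶜ := by
      ext P; simp [Nset, priestleyToFun_eq_true]
    rw [this]; exact isOpen_nset_compl a

lemma inducing_priestleyToFun : Topology.IsInducing (priestleyToFun (L := L)) := by
  constructor
  refine le_antisymm (continuous_iff_le_induced.mp continuous_priestleyToFun)
    (le_generateFrom ?_)
  rintro s (⟨a, rfl⟩ | ⟨a, rfl⟩)
  · rw [isOpen_induced_iff]
    refine ⟨{f : L → Bool | f a = false}, (isClopen_evalSet a false).isOpen, ?_⟩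
    ext P; simp [Nset, priestleyToFun_eq_false]
  · rw [isOpen_induced_iff]
    refine ⟨{f : L → Bool | f a = true}, (isClopen_evalSet a true).isOpen, ?_⟩
    ext P; simp [Nset, priestleyToFun_eq_true]

lemma isClosed_range_priestleyToFun :
    IsClosed (Set.range (priestleyToFun (L := L))) := by
  have hrange : Set.range (priestleyToFun (L := L)) =
      ({f : L → Bool | f ⊥ = true} ∩ {f : L → Bool | f ⊤ = false}) ∩
      ((⋂ (a : L) (b : L) (_ : a ≤ b),
          ({f : L → Bool | f b = false} ∪ {f : L → Bool | f a = true})) ∩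
       ((⋂ (a : L) (b : L),
          ({f : L → Bool | f a = false} ∪ {f : L → Bool | f b = false} ∪
            {f : L → Bool | f (a ⊔ b) = true})) ∩
        (⋂ (a : L) (b : L),
          ({f : L → Bool | f (a ⊓ b) = false} ∪ {f : L → Bool | f a = true} ∪
            {f : L → Bool | f b = true})))) := by
    ext f
    constructor
    · rintro ⟨P, rfl⟩
      refine ⟨⟨priestleyToFun_eq_true.mpr P.1.bot_mem,
        priestleyToFun_eq_false.mpr P.2.toIsProper.top_notMem⟩, ?_, ?_, ?_⟩
      · simp only [Set.mem_iInter, Set.mem_union, Set.mem_setOf_eq]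
        intro a b hab
        rcases Classical.em (b ∈ P.1) with hb | hb
        · exact Or.inr (priestleyToFun_eq_true.mpr (P.1.lower hab hb))
        · exact Or.inl (priestleyToFun_eq_false.mpr hb)
      · simp only [Set.mem_iInter, Set.mem_union, Set.mem_setOf_eq]
        intro a b
        rcases Classical.em (a ∈ P.1) with ha | ha
        · rcases Classical.em (b ∈ P.1) with hb | hb
          · exact Or.inr (priestleyToFun_eq_true.mpr (P.1.sup_mem ha hb))
          · exact Or.inl (Or.inr (priestleyToFun_eq_false.mpr hb))
        · exact Or.inl (Or.inl (priestleyToFun_eq_false.mpr ha))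
      · simp only [Set.mem_iInter, Set.mem_union, Set.mem_setOf_eq]
        intro a b
        rcases Classical.em (a ⊓ b ∈ P.1) with hab | hab
        · rcases P.2.mem_or_mem hab with h | h
          · exact Or.inl (Or.inr (priestleyToFun_eq_true.mpr h))
          · exact Or.inr (priestleyToFun_eq_true.mpr h)
        · exact Or.inl (Or.inl (priestleyToFun_eq_false.mpr hab))
    · rintro ⟨⟨hbot, htop⟩, hlow, hsup, hprime⟩
      simp only [Set.mem_iInter, Set.mem_union, Set.mem_setOf_eq] at hlow hsup hprime
      set I : Set L := {a | f a = true} with hI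
      have hlow' : IsLowerSet I := by
        intro a b hba ha
        rcases hlow b a hba with h | h
        · rw [Set.mem_setOf_eq] at ha; rw [ha] at h; exact absurd h (by simp)
        · exact h
      have hsup' : ∀ {a b : L}, a ∈ I → b ∈ I → a ⊔ b ∈ I := by
        intro a b ha hb
        rcases hsup a b with (h | h) | h
        · rw [Set.mem_setOf_eq] at ha; rw [ha] at h; exact absurd h (by simp)
        · rw [Set.mem_setOf_eq] at hb; rw [hb] at h; exact absurd h (by simp)
        · exact h
      have hIideal : Order.IsIdeal I :=
        ⟨hlow', ⟨⊥, hbot⟩, fun a ha b hb => ⟨a ⊔ b, hsup' ha hb, le_sup_left, le_sup_right⟩⟩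
      set P : Order.Ideal L := hIideal.toIdeal with hP
      have hmemP : ∀ {a : L}, a ∈ P ↔ f a = true := fun {a} => Iff.rfl
      haveI hproper : P.IsProper := by
        refine Order.Ideal.isProper_of_notMem (p := (⊤ : L)) ?_
        rw [hmemP, htop]; simp
      have hprime' : P.IsPrime := by
        refine Order.Ideal.IsPrime.of_mem_or_mem ?_
        intro x y hxy
        rcases hprime x y with (h | h) | h
        · rw [hmemP] at hxy; rw [hxy] at h; exact absurd h (by simp)
        · exact Or.inl h
        · exact Or.inr h
      refine ⟨⟨P, hprime'⟩, ?_⟩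
      funext a
      rcases Bool.eq_false_or_eq_true (f a) with h | h
      · rw [h]; exact priestleyToFun_eq_true.mpr (hmemP.mpr h)
      · rw [h]; refine priestleyToFun_eq_false.mpr ?_
        intro hmem; rw [hmemP.mp hmem] at h; simp at h
  rw [hrange]
  refine (((isClopen_evalSet _ _).isClosed.inter (isClopen_evalSet _ _).isClosed).inter
    ((isClosed_iInter fun a => isClosed_iInter fun b => isClosed_iInter fun _ =>
      ((isClopen_evalSet _ _).union (isClopen_evalSet _ _)).isClosed).inter
     ((isClosed_iInter fun a => isClosed_iInter fun b =>
      (((isClopen_evalSet _ _).union (isClopen_evalSet _ _)).union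
        (isClopen_evalSet _ _)).isClosed).inter
      (isClosed_iInter fun a => isClosed_iInter fun b =>
      (((isClopen_evalSet _ _).union (isClopen_evalSet _ _)).union
        (isClopen_evalSet _ _)).isClosed))))

instance : CompactSpace (PriestleySpec L) := by
  constructor
  rw [inducing_priestleyToFun.isCompact_iff, Set.image_univ]
  exact isClosed_range_priestleyToFun.isCompact

/-! ### The range characterization -/

lemma exists_nset_of_not_mem {U : Set (PriestleySpec L)} (hU : IsClosed U)
    (hLow : IsLowerSet U) {Q : PriestleySpec L} (hQ : Q ∉ U) :
    ∃ a ∈ Q.1, U ⊆ Nset a := by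
  have hcomp : IsCompact U := hU.isCompact
  have hcover : U ⊆ ⋃ a : Q.1, Nset (a : L) := by
    intro P hP
    have hQP : ¬ (Q ≤ P) := fun h => hQ (hLow h hP)
    have h2 : ¬ ∀ x ∈ Q.1, x ∈ P.1 := fun h => hQP fun x hx => h x hx
    push_neg at h2
    obtain ⟨x, hxQ, hxP⟩ := h2
    exact Set.mem_iUnion.mpr ⟨⟨x, hxQ⟩, hxP⟩
  obtain ⟨t, ht⟩ := hcomp.elim_finite_subcover _ (fun a : Q.1 => isOpen_nset (a : L)) hcover
  refine ⟨t.sup (fun a : Q.1 => (a : L)), ?_, ?_⟩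
  · exact Finset.sup_induction Q.1.bot_mem (fun x hx y hy => Q.1.sup_mem hx hy)
      (fun b _ => b.2)
  · intro P hP
    obtain ⟨i, hit, hi⟩ := Set.mem_iUnion₂.mp (ht hP)
    intro hmem
    exact hi (P.1.lower (Finset.le_sup (f := fun a : Q.1 => (a : L)) hit) hmem)

lemma nset_finset_inf {ι : Type*} [DecidableEq ι] (t : Finset ι) (g : ι → L) :
    Nset (t.inf g) = ⋂ i ∈ t, Nset (g i) := by
  induction t using Finset.induction with
  | empty => simp [nset_top]
  | insert a s _ ih => simp [Finset.inf_insert, nset_inf, ih]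

lemma eq_nset_of_isClopen_isLowerSet {U : Set (PriestleySpec L)}
    (hU : IsClopen U) (hLow : IsLowerSet U) : ∃ b : L, Nset b = U := by
  classical
  have key := fun (Q : (Uᶜ : Set (PriestleySpec L))) =>
    exists_nset_of_not_mem hU.isClosed hLow (Q := (Q : PriestleySpec L)) Q.2
  choose a ha₁ ha₂ using key
  have hcover : Uᶜ ⊆ ⋃ Q : (Uᶜ : Set (PriestleySpec L)), (Nset (a Q))ᶜ := by
    intro Q hQ
    exact Set.mem_iUnion.mpr ⟨⟨Q, hQ⟩, not_not.mpr (ha₁ ⟨Q, hQ⟩)⟩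
  have hcomp : IsCompact (Uᶜ : Set (PriestleySpec L)) :=
    (hU.isOpen.isClosed_compl).isCompact
  obtain ⟨t, ht⟩ := hcomp.elim_finite_subcover _
    (fun Q => isOpen_nset_compl (a Q)) hcover
  refine ⟨t.inf a, ?_⟩
  rw [nset_finset_inf]
  apply subset_antisymm
  · intro P hP
    by_contra hPU
    obtain ⟨i, hit, hi⟩ := Set.mem_iUnion₂.mp (ht hPU)
    exact hi (Set.mem_iInter₂.mp hP i hit)
  · intro P hP
    exact Set.mem_iInter₂.mpr fun i _ => ha₂ i hP

/-- The map `a ↦ N_a` is an injective bounded lattice homomorphism from `L` into the lattice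
of subsets of its prime spectrum, whose range is exactly the collection of clopen downward
closed subsets. -/
theorem nset_injective_boundedLatticeHom_range_clopen_lowerSets
    (L : Type*) [DistribLattice L] [BoundedOrder L] :
    Function.Injective (Nset (L := L)) ∧
    Nset (⊥ : L) = (∅ : Set (PriestleySpec L)) ∧
    Nset (⊤ : L) = (Set.univ : Set (PriestleySpec L)) ∧
    (∀ a b : L, Nset (a ⊔ b) = Nset a ∪ Nset b) ∧
    (∀ a b : L, Nset (a ⊓ b) = Nset a ∩ Nset b) ∧
    Set.range (Nset (L := L)) =
      {U : Set (PriestleySpec L) | IsClopen U ∧ IsLowerSet U} := by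
  refine ⟨nset_injective, nset_bot, nset_top, nset_sup, nset_inf, ?_⟩
  ext U
  constructor
  · rintro ⟨a, rfl⟩
    exact ⟨isClopen_nset a, isLowerSet_nset a⟩
  · rintro ⟨hclopen, hlow⟩
    obtain ⟨b, hb⟩ := eq_nset_of_isClopen_isLowerSet hclopen hlow
    exact ⟨b, hb⟩
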